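/- Suppose the graph G is bicycle-free at radius r. For each cycle C in G of length at most 2r, let C⁺ denote the set of vertices of G within graph distance r − len(C)/2 of the vertex set of C. Then for any two distinct cycles C₁ ≠ C₂ of length at most 2r, the sets C₁⁺ and C₂⁺ are disjoint. -/

import Mathlib

open scoped Classical

namespace NearRamanujan

variable {V : Type*} [Fintype V] [DecidableEq V]

/-- The set of vertices within distance `r` of `v` in `G`. -/
noncomputable def ball (G : SimpleGraph V) (v : V) (r : ℕ) : Finset V :=
  Finset.univ.filter (fun u => ∃ p : G.Walk v u, p.length ≤ r)

/-- The number of edges of the subgraph of `G` induced on the vertex set `S`. -/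
noncomputable def edgesWithin (G : SimpleGraph V) (S : Finset V) : ℕ :=
  (G.edgeFinset.filter (fun e => ∀ x ∈ e, x ∈ S)).card

/-- `G` is bicycle-free at radius `r`: the subgraph induced on each radius-`r` ball
(which is a connected graph) contains at most one cycle, equivalently it has at most
as many edges as vertices. -/
def BicycleFree (G : SimpleGraph V) (r : ℕ) : Prop :=
  ∀ v : V, edgesWithin G (ball G v r) ≤ (ball G v r).card

/-- The value in `{±1}` of an edge-signing `σ : G.edgeSet → Bool` on `e` (`0` off the edges). -/
noncomputable def edgeSign (G : SimpleGraph V) (σ : G.edgeSet → Bool) (e : Sym2 V) : ℝ :=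
  if h : e ∈ G.edgeSet then (if σ ⟨e, h⟩ then 1 else -1) else 0

/-- The signed adjacency matrix of the edge-signing `σ` of `G`. -/
noncomputable def signedAdj (G : SimpleGraph V) (σ : G.edgeSet → Bool) : Matrix V V ℝ :=
  fun u v => if G.Adj u v then edgeSign G σ s(u, v) else 0

/-- The signed non-backtracking matrix of the edge-signing `σ` of `G`, indexed by
the darts (directed edges) of `G`. -/
noncomputable def nbMatrix (G : SimpleGraph V) (σ : G.edgeSet → Bool) :
    Matrix G.Dart G.Dart ℝ :=
  fun e f => if e.snd = f.fst ∧ f.snd ≠ e.fst then edgeSign G σ s(f.fst, f.snd) else 0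


/-- The set `C⁺` of vertices within distance `r − len(C)/2` of the cycle `c`. -/
noncomputable def cyclePlus (G : SimpleGraph V) (r : ℕ) {u : V} (c : G.Walk u u) :
    Finset V :=
  Finset.univ.filter (fun x =>
    ∃ y ∈ c.support, ∃ p : G.Walk x y, p.length ≤ r - c.length / 2)

end NearRamanujan

/-!
If `x` lies in both `C₁⁺` and `C₂⁺`, every vertex of either cycle is within distance `r` of `x`:
reach the cycle in at most `r - len(C)/2` steps, then go round it the shorter way. So both cycles
live in the subgraph induced on the ball of radius `r` around `x`, which is connected. An edge on
one cycle but not the other is no bridge, and deleting it leaves a connected graph that still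
contains the other cycle, hence is not a tree; so the ball has more edges than vertices.
-/

namespace SimpleGraph

variable {V : Type*} {G : SimpleGraph V}

theorem Walk.exists_walk_length_le_half [DecidableEq V] {u y z : V} (c : G.Walk u u)
    (hy : y ∈ c.support) (hz : z ∈ c.support) : ∃ q : G.Walk y z, q.length ≤ c.length / 2 := by
  set c' := c.rotate y hy
  have hz' : z ∈ c'.support := (c.mem_support_rotate_iff y hy).2 hz
  have hlen : (c'.takeUntil z hz').length + (c'.dropUntil z hz').length = c.length := by
    rw [← Walk.length_append, Walk.take_spec, Walk.length_rotate]
  by_cases h : (c'.takeUntil z hz').length ≤ c.length / 2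
  · exact ⟨_, h⟩
  · exact ⟨(c'.dropUntil z hz').reverse, by rw [Walk.length_reverse]; omega⟩

theorem Walk.IsCycle.induce {s : Set V} {u : V} {c : G.Walk u u} (hc : c.IsCycle)
    (hs : ∀ x ∈ c.support, x ∈ s) : (c.induce s hs).IsCycle :=
  (Walk.isCycle_map_iff_of_injective (Embedding.induce (G := G) s).injective).1
    (by rwa [Walk.map_induce])

theorem Walk.image_edgeSet_induce {s : Set V} {u v : V} (p : G.Walk u v)
    (hs : ∀ x ∈ p.support, x ∈ s) : Sym2.map (↑) '' (p.induce s hs).edgeSet = p.edgeSet :=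
  (Walk.edgeSet_map (Embedding.induce s).toHom _).symm.trans
    (congrArg Walk.edgeSet (p.map_induce hs))

theorem Connected.card_lt_card_edgeSet_of_mem_isCycle [Finite V] (hG : G.Connected) {u v : V}
    {c₁ : G.Walk u u} {c₂ : G.Walk v v} (h₁ : c₁.IsCycle) (h₂ : c₂.IsCycle) {e : Sym2 V}
    (he₂ : e ∈ c₂.edges) (he₁ : e ∉ c₁.edges) : Nat.card V < Nat.card G.edgeSet := by
  have hbridge : ¬G.IsBridge e := fun hb => hb.notMem_edges_of_isCycle h₂ he₂
  induction e using Sym2.ind with | _ x y => ?_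
  have hG' := hG.connected_delete_edge_of_not_isBridge hbridge
  have hc₁ : (c₁.toDeleteEdges {s(x, y)}
      fun f hf hfe => he₁ (Set.mem_singleton_iff.1 hfe ▸ hf)).IsCycle :=
    h₁.transfer _
  have hnotTree : Nat.card (G.deleteEdges {s(x, y)}).edgeSet + 1 ≠ Nat.card V :=
    fun h => (isTree_iff_connected_and_card.2 ⟨hG', h⟩).isAcyclic _ hc₁
  have hcard : Nat.card (G.deleteEdges {s(x, y)}).edgeSet + 1 = Nat.card G.edgeSet := by
    rw [edgeSet_deleteEdges, Nat.card_coe_set_eq, Nat.card_coe_set_eq,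
      Set.ncard_sdiff_singleton_add_one (c₂.edges_subset_edgeSet he₂) (Set.toFinite _)]
  have := hG'.card_vert_le_card_edgeSet_add_one
  omega

theorem Connected.card_lt_card_edgeSet_of_isCycle [Finite V] (hG : G.Connected) {u v : V}
    {c₁ : G.Walk u u} {c₂ : G.Walk v v} (h₁ : c₁.IsCycle) (h₂ : c₂.IsCycle)
    (hne : c₁.edgeSet ≠ c₂.edgeSet) : Nat.card V < Nat.card G.edgeSet := by
  obtain ⟨e, he⟩ := Set.symmDiff_nonempty.2 hne
  rcases he with ⟨he₁, he₂⟩ | ⟨he₂, he₁⟩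
  · exact hG.card_lt_card_edgeSet_of_mem_isCycle h₂ h₁ he₁ he₂
  · exact hG.card_lt_card_edgeSet_of_mem_isCycle h₁ h₂ he₂ he₁

end SimpleGraph

namespace NearRamanujan

open SimpleGraph

variable {V : Type*} [Fintype V] [DecidableEq V] {G : SimpleGraph V}

theorem mem_ball_of_mem_support {r : ℕ} {x y z : V} (p : G.Walk x y) (hp : p.length ≤ r)
    (hz : z ∈ p.support) : z ∈ ball G x r := by
  simp only [ball, Finset.mem_filter, Finset.mem_univ, true_and]
  exact ⟨p.takeUntil z hz, (p.length_takeUntil_le_length hz).trans hp⟩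

theorem connected_induce_ball (G : SimpleGraph V) (x : V) (r : ℕ) :
    (G.induce (ball G x r : Set V)).Connected := by
  have hx : x ∈ ball G x r := mem_ball_of_mem_support Walk.nil (Nat.zero_le r) (by simp)
  refine (connected_iff_exists_forall_reachable _).2 ⟨⟨x, hx⟩, fun w => ?_⟩
  obtain ⟨p, hp⟩ : ∃ p : G.Walk x w, p.length ≤ r := by simpa [ball] using w.2
  exact ⟨p.induce _ fun z hz => mem_ball_of_mem_support p hp hz⟩

theorem edgesWithin_eq_card_edgeSet_induce (G : SimpleGraph V) (S : Finset V) :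
    edgesWithin G S = Nat.card (G.induce (S : Set V)).edgeSet := by
  rw [edgesWithin, Nat.card_eq_fintype_card, ← edgeFinset_card,
    ← card_filter_edgeFinset_toFinset_subset]
  simp only [Finset.subset_iff, Sym2.mem_toFinset]

theorem support_subset_ball_of_mem_cyclePlus {r : ℕ} {u x : V} {c : G.Walk u u}
    (hc : c.length ≤ 2 * r) (hx : x ∈ cyclePlus G r c) : ∀ z ∈ c.support, z ∈ ball G x r := by
  simp only [cyclePlus, Finset.mem_filter, Finset.mem_univ, true_and] at hx
  obtain ⟨y, hy, p, hp⟩ := hx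
  intro z hz
  obtain ⟨q, hq⟩ := c.exists_walk_length_le_half hy hz
  refine mem_ball_of_mem_support (p.append q) ?_ (p.append q).end_mem_support
  rw [Walk.length_append]
  omega

/-- Proposition 2.16.  Suppose `G` is bicycle-free at radius `r`. For a
cycle `C` of length at most `2r`, let `C⁺` be the set of vertices within distance
`r − len(C)/2` of `C`.  Then for distinct cycles `C₁ ≠ C₂` of length at most `2r`
(distinct meaning their edge sets differ), the sets `C₁⁺` and `C₂⁺` are disjoint. -/
theorem cyclePlus_disjoint_of_bicycleFree {V : Type*} [Fintype V] [DecidableEq V]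
    (G : SimpleGraph V) (r : ℕ) (h : BicycleFree G r)
    (u v : V) (c₁ : G.Walk u u) (c₂ : G.Walk v v)
    (h₁ : c₁.IsCycle) (h₂ : c₂.IsCycle)
    (hl₁ : c₁.length ≤ 2 * r) (hl₂ : c₂.length ≤ 2 * r)
    (hne : c₁.edges.toFinset ≠ c₂.edges.toFinset) :
    ∀ x : V, x ∈ cyclePlus G r c₁ → x ∉ cyclePlus G r c₂ := by
  intro x hx₁ hx₂
  set S := ball G x r
  have hS₁ := support_subset_ball_of_mem_cyclePlus hl₁ hx₁
  have hS₂ := support_subset_ball_of_mem_cyclePlus hl₂ hx₂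
  have hne' : (c₁.induce S hS₁).edgeSet ≠ (c₂.induce S hS₂).edgeSet := by
    intro heq
    apply hne
    have hedges : c₁.edgeSet = c₂.edgeSet := by
      rw [← c₁.image_edgeSet_induce hS₁, ← c₂.image_edgeSet_induce hS₂, heq]
    ext e
    exact List.mem_toFinset.trans ((Set.ext_iff.1 hedges e).trans List.mem_toFinset.symm)
  have hlt := (connected_induce_ball G x r).card_lt_card_edgeSet_of_isCycle
    (h₁.induce hS₁) (h₂.induce hS₂) hne'
  have hle := h x
  rw [edgesWithin_eq_card_edgeSet_induce] at hle
  rw [Nat.card_coe_set_eq, Set.ncard_coe_finset] at hlt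
  omega

end NearRamanujan
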